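/- arXiv:1511.05826 — 3 statements merged into one kernel-verified Lean document; each statement's English description precedes it below -/
import Mathlib

section
/- For monotone maps between finite linear orders, there is a natural bijection between the set of functors [n+1] → [m+1] preserving both endpoints (i.e. sending 0 to 0 and n+1 to m+1 and preserving order) and the set of order-preserving maps [m] → [n]; explicitly, a bi-pointed monotone map φ : [n+1] → [m+1] corresponds to ψ : [m] → [n] determined by ψ(i) + 1 = min { j | φ(j) > i }. -/
/-!
Extend `ψ : [m] → [n]` to `[m+1] → [n+1]` by sending `m+1` to `n+1`. Then `φ` and `ψ`
correspond exactly when this extension is the upper adjoint of `φ`, i.e.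
`φ j ≤ i ↔ j ≤ ψ i`. Adjoints determine each other, so the correspondence is a bijection once
both directions exist: a bi-pointed `φ` has the upper adjoint `i ↦ max {j | φ j ≤ i}`
(`φ 0 = 0` makes the set nonempty, `φ (n+1) = m+1` keeps the value `≤ n` for `i ≤ m`), and every
`ψ` has the lower adjoint `j ↦ min {i | j ≤ ψ i}`, which is automatically bi-pointed. Negating
the adjunction gives `i < φ j ↔ ψ i < j`, which is the formula `ψ i + 1 = min {j | i < φ j}`.
-/

open Set

section ConditionallyCompleteLinearOrder

variable {α : Type*} [ConditionallyCompleteLinearOrder α] {s : Set α} {a : α}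

theorem IsLowerSet.le_csSup_iff_mem (hs : IsLowerSet s) (hne : s.Nonempty) (hfin : s.Finite) :
    a ≤ sSup s ↔ a ∈ s :=
  ⟨fun h => hs h (hne.csSup_mem hfin), fun h => le_csSup hfin.bddAbove h⟩

theorem IsUpperSet.csInf_le_iff_mem (hs : IsUpperSet s) (hne : s.Nonempty) (hfin : s.Finite) :
    sInf s ≤ a ↔ a ∈ s :=
  ⟨fun h => hs h (hne.csInf_mem hfin), fun h => csInf_le hfin.bddBelow h⟩

end ConditionallyCompleteLinearOrder

namespace Fin

variable {n m : ℕ}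

/-- The adjunction `φ ⊣ ψ'`, for `ψ'` the extension of `ψ` by `m + 1 ↦ n + 1`, tested only at
`i ≤ m`: at `i = m + 1` both sides hold. -/
def IsJoyalDual (φ : Fin (n + 2) →o Fin (m + 2)) (ψ : Fin (m + 1) →o Fin (n + 1)) : Prop :=
  ∀ j i, φ j ≤ i.castSucc ↔ j ≤ (ψ i).castSucc

namespace IsJoyalDual

variable {φ φ' : Fin (n + 2) →o Fin (m + 2)} {ψ ψ' : Fin (m + 1) →o Fin (n + 1)}

theorem map_zero (h : IsJoyalDual φ ψ) : φ 0 = 0 :=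
  le_zero_iff.1 ((h 0 0).2 (zero_le _))

theorem map_last (h : IsJoyalDual φ ψ) : φ (last (n + 1)) = last (m + 1) := by
  have hlt : (last m).castSucc < φ (last (n + 1)) :=
    not_le.1 fun hle => not_le.2 (castSucc_lt_last _) ((h _ _).1 hle)
  rw [castSucc_lt_iff_succ_le, succ_last] at hlt
  exact le_antisymm (le_last _) hlt

theorem left_unique (h : IsJoyalDual φ ψ) (h' : IsJoyalDual φ' ψ) : φ = φ' := by
  refine OrderHom.ext _ _ (funext fun j => eq_of_forall_ge_iff fun k => ?_)
  induction k using lastCases with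
  | last => simp only [le_last]
  | cast i => rw [h, h']

theorem right_unique (h : IsJoyalDual φ ψ) (h' : IsJoyalDual φ ψ') : ψ = ψ' := by
  refine OrderHom.ext _ _ (funext fun i => ?_)
  exact castSucc_injective _ (eq_of_forall_le_iff fun j => by rw [← h, ← h'])

theorem castSucc_lt_iff (h : IsJoyalDual φ ψ) (j : Fin (n + 2)) (i : Fin (m + 1)) :
    i.castSucc < φ j ↔ (ψ i).castSucc < j := by
  rw [← not_le, ← not_le, h]

theorem val_add_one_eq_sInf (h : IsJoyalDual φ ψ) (i : Fin (m + 1)) :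
    (ψ i : ℕ) + 1 = sInf {j : ℕ | ∃ hj : j < n + 2, (i : ℕ) < (φ ⟨j, hj⟩ : ℕ)} := by
  have hmem (j : ℕ) (hj : j < n + 2) : (i : ℕ) < (φ ⟨j, hj⟩ : ℕ) ↔ (ψ i : ℕ) < j := by
    simpa [lt_def] using h.castSucc_lt_iff ⟨j, hj⟩ i
  refine (IsLeast.csInf_eq ⟨?_, ?_⟩).symm
  · exact ⟨by omega, (hmem _ _).2 (lt_add_one _)⟩
  · rintro j ⟨hj, hlt⟩
    exact (hmem j hj).1 hlt

end IsJoyalDual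

section OfBipointed

variable (φ : Fin (n + 2) →o Fin (m + 2))

theorem le_sSup_preimage_Iic_iff (h0 : φ 0 = 0) (i : Fin (m + 1)) {j : Fin (n + 2)} :
    j ≤ sSup (φ ⁻¹' Iic i.castSucc) ↔ φ j ≤ i.castSucc :=
  ((isLowerSet_Iic _).preimage φ.monotone).le_csSup_iff_mem ⟨0, by simp [h0]⟩ (toFinite _)

theorem sSup_preimage_Iic_ne_last (h0 : φ 0 = 0) (hlast : φ (last (n + 1)) = last (m + 1))
    (i : Fin (m + 1)) : sSup (φ ⁻¹' Iic i.castSucc) ≠ last (n + 1) := fun htop => by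
  have := (le_sSup_preimage_Iic_iff φ h0 i).1 htop.ge
  rw [hlast] at this
  exact not_le.2 (castSucc_lt_last i) this

noncomputable def joyalDual (h0 : φ 0 = 0) (hlast : φ (last (n + 1)) = last (m + 1)) :
    Fin (m + 1) →o Fin (n + 1) where
  toFun i := (sSup (φ ⁻¹' Iic i.castSucc)).castPred (sSup_preimage_Iic_ne_last φ h0 hlast i)
  monotone' i i' hii' := by
    rw [castPred_le_castPred_iff, le_sSup_preimage_Iic_iff φ h0]
    exact ((le_sSup_preimage_Iic_iff φ h0 i).1 le_rfl).trans (castSucc_le_castSucc_iff.2 hii')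

theorem castSucc_joyalDual_apply (h0 : φ 0 = 0) (hlast : φ (last (n + 1)) = last (m + 1))
    (i : Fin (m + 1)) : (joyalDual φ h0 hlast i).castSucc = sSup (φ ⁻¹' Iic i.castSucc) :=
  castSucc_castPred _ (sSup_preimage_Iic_ne_last φ h0 hlast i)

theorem isJoyalDual_joyalDual (h0 : φ 0 = 0) (hlast : φ (last (n + 1)) = last (m + 1)) :
    IsJoyalDual φ (joyalDual φ h0 hlast) := fun j i => by
  rw [castSucc_joyalDual_apply, le_sSup_preimage_Iic_iff φ h0]

end OfBipointed

section OfIntervalMap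

variable (ψ : Fin (m + 1) →o Fin (n + 1))

noncomputable def joyalDualSymm : Fin (n + 2) →o Fin (m + 2) where
  toFun j := sInf {k | ∀ i : Fin (m + 1), k ≤ i.castSucc → j ≤ (ψ i).castSucc}
  monotone' _ _ hjj' := sInf_le_sInf fun _ hk i hki => hjj'.trans (hk i hki)

theorem isJoyalDual_joyalDualSymm : IsJoyalDual (joyalDualSymm ψ) ψ := fun j i => by
  let T : Set (Fin (m + 2)) := {k | ∀ i' : Fin (m + 1), k ≤ i'.castSucc → j ≤ (ψ i').castSucc}
  have hup : IsUpperSet T := fun k k' hkk' hk i' hk' => hk i' (hkk'.trans hk')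
  have hlast : last (m + 1) ∈ T := fun i' hi' => absurd hi' (not_le.2 (castSucc_lt_last i'))
  change sInf T ≤ _ ↔ _
  rw [hup.csInf_le_iff_mem ⟨_, hlast⟩ (toFinite _)]
  exact ⟨fun hi => hi i le_rfl, fun hj i' hii' =>
    hj.trans (castSucc_le_castSucc_iff.2 (ψ.monotone (castSucc_le_castSucc_iff.1 hii')))⟩

end OfIntervalMap

variable (n m) in
noncomputable def joyalEquiv :
    {φ : Fin (n + 2) →o Fin (m + 2) // φ 0 = 0 ∧ φ (last (n + 1)) = last (m + 1)} ≃
      (Fin (m + 1) →o Fin (n + 1)) where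
  toFun φ := joyalDual φ.1 φ.2.1 φ.2.2
  invFun ψ := ⟨joyalDualSymm ψ, (isJoyalDual_joyalDualSymm ψ).map_zero,
    (isJoyalDual_joyalDualSymm ψ).map_last⟩
  left_inv φ := Subtype.ext <|
    (isJoyalDual_joyalDualSymm _).left_unique (isJoyalDual_joyalDual φ.1 φ.2.1 φ.2.2)
  right_inv ψ := (isJoyalDual_joyalDual _ _ _).right_unique (isJoyalDual_joyalDualSymm ψ)

end Fin

/-- Joyal duality: for all `n m`, there is a bijection between bi-pointed
monotone maps `φ : [n+1] → [m+1]` (order-preserving, `φ(0) = 0`, `φ(n+1) = m+1`) and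
order-preserving maps `ψ : [m] → [n]`, determined explicitly by
`ψ(i) + 1 = min { j | φ(j) > i }`. -/
theorem joyal_duality (n m : ℕ) :
    ∃ e : {φ : Fin (n + 2) →o Fin (m + 2) //
            φ 0 = 0 ∧ φ (Fin.last (n + 1)) = Fin.last (m + 1)} ≃
          (Fin (m + 1) →o Fin (n + 1)),
      ∀ (φ : {φ : Fin (n + 2) →o Fin (m + 2) //
            φ 0 = 0 ∧ φ (Fin.last (n + 1)) = Fin.last (m + 1)})
        (i : Fin (m + 1)),
        ((e φ) i : ℕ) + 1
          = sInf {j : ℕ | ∃ hj : j < n + 2, (i : ℕ) < (φ.1 ⟨j, hj⟩ : ℕ)} :=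
  ⟨Fin.joyalEquiv n m, fun φ => (Fin.isJoyalDual_joyalDual φ.1 φ.2.1 φ.2.2).val_add_one_eq_sInf⟩
end

section
/- Let X be a topological space pointed at *, and Y ⊆ X a subspace containing *. The maps Ω(X,Y) × Δ^k → X^k × Y sending (γ, (t₁ ≤ ⋯ ≤ t_k)) to (γ(t₁), …, γ(t_k), γ(1)) assemble into a homeomorphism from the relative loop space Ω(X,Y) to the totalization Tot(ω(X,Y)) of the cosimplicial relative loop space. -/
namespace RelLoopTot

variable {X : Type*} [TopologicalSpace X]

/-- The relative loop space `Ω(X,Y)`: continuous paths `γ : [0,1] → X` with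
`γ(0) = *` and `γ(1) ∈ Y`, with the compact-open topology. -/
def RelLoop (star : X) (Y : Set X) : Type _ :=
  {γ : C(unitInterval, X) // γ 0 = star ∧ γ 1 ∈ Y}

instance (star : X) (Y : Set X) : TopologicalSpace (RelLoop star Y) :=
  instTopologicalSpaceSubtype

/-- The topological `k`-simplex `Δ^k = {0 ≤ t₁ ≤ ⋯ ≤ t_k ≤ 1}`. -/
def simplex (k : ℕ) : Type :=
  {t : Fin k → unitInterval // Monotone t}

instance (k : ℕ) : TopologicalSpace (simplex k) := instTopologicalSpaceSubtype

/-- Auxiliary extension of the tuple `t` by `0` at the beginning and `1` at the end. -/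
def extT {k : ℕ} (t : Fin k → unitInterval) : ℕ → unitInterval :=
  fun p => if h0 : p = 0 then 0 else if h : p ≤ k then t ⟨p - 1, by omega⟩ else 1

/-- The underlying function of the coface `dⁱ : Δ^k → Δ^{k+1}` of the standard
cosimplicial space: `d⁰` inserts `0` in front, `dⁱ` doubles `t_i` (`1 ≤ i ≤ k`),
`d^{k+1}` appends `1`. -/
def cofaceT (k i : ℕ) (t : Fin k → unitInterval) : Fin (k + 1) → unitInterval :=
  fun j => if (j : ℕ) + 1 ≤ i then extT t ((j : ℕ) + 1) else extT t (j : ℕ)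

/-- The underlying function of the codegeneracy `sⁱ : Δ^{k+1} → Δ^k`: delete `t_{i+1}`. -/
def codegenT (k i : ℕ) (t : Fin (k + 1) → unitInterval) : Fin k → unitInterval :=
  fun j => if (j : ℕ) < i then t j.castSucc else t j.succ

/-- Auxiliary extension for `ω(X,Y)`: basepoint at `0`, `y` beyond `k`. -/
def extO (star : X) {k : ℕ} (x : Fin k → X) (y : X) : ℕ → X :=
  fun p => if h0 : p = 0 then star else if h : p ≤ k then x ⟨p - 1, by omega⟩ else y

/-- Coface of the cosimplicial relative loop space `ω(X,Y)^k = X^k × Y`. -/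
def cofaceO (star : X) (Y : Set X) (k i : ℕ) :
    (Fin k → X) × Y → (Fin (k + 1) → X) × Y :=
  fun z => (fun j => if (j : ℕ) + 1 ≤ i then extO star z.1 (z.2 : X) ((j : ℕ) + 1)
                     else extO star z.1 (z.2 : X) (j : ℕ), z.2)

/-- Codegeneracy of `ω(X,Y)`. -/
def codegenO (star : X) (Y : Set X) (k i : ℕ) :
    (Fin (k + 1) → X) × Y → (Fin k → X) × Y :=
  fun z => (fun j => if (j : ℕ) < i then z.1 j.castSucc else z.1 j.succ, z.2)

/-- The totalization `Tot(ω(X,Y))`: families of continuous maps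
`u_k : Δ^k → ω(X,Y)^k` compatible with all cofaces and codegeneracies, i.e. the space
of cosimplicial maps `Δ^• → ω(X,Y)`, topologised as a subspace of the product of the
compact-open mapping spaces. -/
def Tot (star : X) (Y : Set X) : Type _ :=
  {u : ∀ k : ℕ, C(simplex k, (Fin k → X) × Y) //
    (∀ (k i : ℕ), i ≤ k + 1 → ∀ (t : simplex k) (t' : simplex (k + 1)),
      (t'.1 : Fin (k + 1) → unitInterval) = cofaceT k i t.1 →
      u (k + 1) t' = cofaceO star Y k i (u k t)) ∧
    (∀ (k i : ℕ), i ≤ k → ∀ (t : simplex (k + 1)) (t'' : simplex k),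
      (t''.1 : Fin k → unitInterval) = codegenT k i t.1 →
      u k t'' = codegenO star Y k i (u (k + 1) t))}

instance (star : X) (Y : Set X) : TopologicalSpace (Tot star Y) :=
  instTopologicalSpaceSubtype

/-! The tuple `(γ(t₁), …, γ(t_k), γ(1))` is the image of `(t₁, …, t_k)` under a cosimplicial
map `Δ^• → ω(X,Y)` because evaluating `γ` intertwines the cofaces and codegeneracies of the two
sides (`d⁰` and `d^{k+1}` match because `γ(0) = *` and `γ(1) = y`). Conversely, a point `u` of
`Tot(ω(X,Y))` is determined by the path `γ(s) = u₁(s)`: each coordinate of `u_{k+1}(t)` is a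
coordinate of `u_k(sⁱ t)` for a codegeneracy `sⁱ` that keeps it, so by induction
`u_k(t) = (γ(t₁), …, γ(t_k), y)`, and the cofaces `d⁰, d¹ : Δ⁰ → Δ¹` give `γ(0) = *` and
`γ(1) = y ∈ Y`. Continuity of `γ ↦ u` is the exponential law for the locally compact `[0,1]`;
the inverse is pre- and postcomposition with `[0,1] ≅ Δ¹` and `X × Y → X`. -/

variable {star : X} {Y : Set X}

omit [TopologicalSpace X] in
theorem extO_comp_of_map_zero {f : unitInterval → X} (hf : f 0 = star) {k : ℕ}
    (t : Fin k → unitInterval) (p : ℕ) : extO star (f ∘ t) (f 1) p = f (extT t p) := by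
  unfold extO extT
  split_ifs <;> simp [hf]

omit [TopologicalSpace X] in
theorem cofaceO_comp_of_map_zero {f : unitInterval → X} (hf : f 0 = star) (hf1 : f 1 ∈ Y)
    (k i : ℕ) (t : Fin k → unitInterval) :
    cofaceO star Y k i (f ∘ t, ⟨f 1, hf1⟩) = (f ∘ cofaceT k i t, ⟨f 1, hf1⟩) := by
  ext j : 2
  · simp only [cofaceO, cofaceT, extO_comp_of_map_zero hf, Function.comp_apply]
    split_ifs <;> rfl
  · rfl

omit [TopologicalSpace X] in
theorem codegenO_comp (f : unitInterval → X) (y : Y) (k i : ℕ) (t : Fin (k + 1) → unitInterval) :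
    codegenO star Y k i (f ∘ t, y) = (f ∘ codegenT k i t, y) := by
  ext j : 2
  · simp only [codegenO, codegenT, Function.comp_apply]
    split_ifs <;> rfl
  · rfl

theorem codegenT_self {k : ℕ} (t : Fin (k + 1) → unitInterval) (j : Fin k) :
    codegenT k k t j = t j.castSucc := if_pos j.isLt

theorem codegenT_zero {k : ℕ} (t : Fin (k + 1) → unitInterval) (j : Fin k) :
    codegenT k 0 t j = t j.succ := if_neg (Nat.not_lt_zero _)

theorem monotone_codegenT {k : ℕ} (i : ℕ) {t : Fin (k + 1) → unitInterval} (ht : Monotone t) :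
    Monotone (codegenT k i t) := by
  intro a b hab
  have hab : (a : ℕ) ≤ b := hab
  unfold codegenT
  split_ifs <;> apply ht <;> rw [Fin.le_def] <;> simp <;> omega

namespace simplex

instance : Unique (simplex 0) where
  default := ⟨finZeroElim, fun a => a.elim0⟩
  uniq _ := Subtype.ext (funext finZeroElim)

def ofUnitInterval : C(unitInterval, simplex 1) :=
  ⟨fun s => ⟨fun _ => s, monotone_const⟩, by fun_prop⟩

@[simp]
theorem coe_ofUnitInterval (s : unitInterval) : (ofUnitInterval s).1 = fun _ => s := rfl

theorem eq_ofUnitInterval (t : simplex 1) : t = ofUnitInterval (t.1 0) :=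
  Subtype.ext (funext fun j => by rw [Subsingleton.elim j 0]; rfl)

def codegen (k i : ℕ) (t : simplex (k + 1)) : simplex k :=
  ⟨codegenT k i t.1, monotone_codegenT i t.2⟩

end simplex

namespace RelLoop

def evalSimplex (γ : RelLoop star Y) (k : ℕ) : C(simplex k, (Fin k → X) × Y) :=
  ⟨fun t => (γ.1 ∘ t.1, ⟨γ.1 1, γ.2.2⟩),
    (continuous_pi fun j =>
      γ.1.continuous.comp ((continuous_apply j).comp continuous_subtype_val)).prodMk
        continuous_const⟩

theorem evalSimplex_apply (γ : RelLoop star Y) {k : ℕ} (t : simplex k) :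
    γ.evalSimplex k t = (γ.1 ∘ t.1, ⟨γ.1 1, γ.2.2⟩) := rfl

def toTot (γ : RelLoop star Y) : Tot star Y :=
  ⟨γ.evalSimplex,
    fun k i _ t t' ht' => by
      rw [evalSimplex_apply, evalSimplex_apply, ht', cofaceO_comp_of_map_zero γ.2.1 γ.2.2],
    fun k i _ t t'' ht'' => by
      rw [evalSimplex_apply, evalSimplex_apply, ht'', codegenO_comp]⟩

theorem continuous_toTot : Continuous (toTot : RelLoop star Y → Tot star Y) := by
  refine Continuous.subtype_mk (continuous_pi fun k => ?_) _
  refine ContinuousMap.continuous_of_continuous_uncurry _ ?_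
  have hγ : Continuous fun p : RelLoop star Y × simplex k => p.1.1 :=
    continuous_subtype_val.comp continuous_fst
  have ht (j : Fin k) : Continuous fun p : RelLoop star Y × simplex k => p.2.1 j :=
    (continuous_apply j).comp (continuous_subtype_val.comp continuous_snd)
  exact (continuous_pi fun j => continuous_eval.comp (hγ.prodMk (ht j))).prodMk
    (((continuous_eval_const 1).comp hγ).subtype_mk _)

end RelLoop

namespace Tot

def path (u : Tot star Y) : C(unitInterval, X) :=
  (ContinuousMap.mk (fun z : (Fin 1 → X) × Y => z.1 0) (by fun_prop)).comp
    ((u.1 1).comp simplex.ofUnitInterval)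

theorem continuous_path : Continuous (path : Tot star Y → C(unitInterval, X)) :=
  (ContinuousMap.continuous_postcomp _).comp
    ((ContinuousMap.continuous_precomp _).comp ((continuous_apply 1).comp continuous_subtype_val))

theorem path_zero (u : Tot star Y) : u.path 0 = star := by
  have h := u.2.1 0 0 (Nat.zero_le _) default (simplex.ofUnitInterval 0)
    (funext fun j => by simp [cofaceT, extT])
  simp [path, h, cofaceO, extO]

theorem path_one (u : Tot star Y) : u.path 1 = (u.1 0 default).2 := by
  have h := u.2.1 0 1 (by omega) default (simplex.ofUnitInterval 1)
    (funext fun j => by simp [cofaceT, extT])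
  simp [path, h, cofaceO, extO]

theorem snd_apply (u : Tot star Y) : ∀ (k : ℕ) (t : simplex k), (u.1 k t).2 = (u.1 0 default).2
  | 0, t => by rw [Subsingleton.elim t default]
  | k + 1, t => by
    rw [← snd_apply u k (simplex.codegen k 0 t), u.2.2 k 0 k.zero_le t _ rfl]
    rfl

theorem fst_apply_castSucc (u : Tot star Y) {k : ℕ} (t : simplex (k + 1)) (j : Fin k) :
    (u.1 (k + 1) t).1 j.castSucc = (u.1 k (simplex.codegen k k t)).1 j := by
  rw [u.2.2 k k le_rfl t _ rfl]
  exact (if_pos j.isLt).symm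

theorem fst_apply_succ (u : Tot star Y) {k : ℕ} (t : simplex (k + 1)) (j : Fin k) :
    (u.1 (k + 1) t).1 j.succ = (u.1 k (simplex.codegen k 0 t)).1 j := by
  rw [u.2.2 k 0 k.zero_le t _ rfl]
  simp [codegenO]

theorem fst_apply (u : Tot star Y) :
    ∀ (k : ℕ) (t : simplex k) (j : Fin k), (u.1 k t).1 j = u.path (t.1 j)
  | 1, t, j => by rw [Subsingleton.elim j 0, simplex.eq_ofUnitInterval t]; rfl
  | k + 2, t, j => by
    induction j using Fin.cases with
    | zero =>
      rw [← Fin.castSucc_zero, fst_apply_castSucc, fst_apply u (k + 1)]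
      exact congrArg u.path (codegenT_self t.1 0)
    | succ j =>
      rw [fst_apply_succ, fst_apply u (k + 1)]
      exact congrArg u.path (codegenT_zero t.1 j)

def toRelLoop (u : Tot star Y) : RelLoop star Y :=
  ⟨u.path, u.path_zero, u.path_one ▸ (u.1 0 default).2.2⟩

theorem continuous_toRelLoop : Continuous (toRelLoop : Tot star Y → RelLoop star Y) :=
  continuous_path.subtype_mk _

theorem toRelLoop_toTot (u : Tot star Y) : u.toRelLoop.toTot = u :=
  Subtype.ext (funext fun k => ContinuousMap.ext fun t =>
    Prod.ext (funext (fst_apply u k t ·)).symm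
      (Subtype.ext (u.path_one.trans (congrArg Subtype.val (snd_apply u k t).symm))))

end Tot

def relLoopHomeoTot : RelLoop star Y ≃ₜ Tot star Y where
  toFun := RelLoop.toTot
  invFun := Tot.toRelLoop
  left_inv _ := rfl
  right_inv := Tot.toRelLoop_toTot
  continuous_toFun := RelLoop.continuous_toTot
  continuous_invFun := Tot.continuous_toRelLoop

theorem relLoop_homeo_tot_general (star : X) (Y : Set X) :
    ∃ h : RelLoop star Y ≃ₜ Tot star Y,
      ∀ (γ : RelLoop star Y) (k : ℕ) (t : simplex k),
        ((h γ).1 k) t = (fun j => γ.1 (t.1 j), ⟨γ.1 1, γ.2.2⟩) :=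
  ⟨relLoopHomeoTot, fun _ _ _ => rfl⟩

/-- the maps `Ω(X,Y) × Δ^k → X^k × Y`,
`(γ, (t₁ ≤ ⋯ ≤ t_k)) ↦ (γ(t₁), …, γ(t_k), γ(1))` assemble into a homeomorphism
`Ω(X,Y) ≅ Tot(ω(X,Y))`. -/
theorem relLoop_homeo_tot (star : X) (Y : Set X) (hstar : star ∈ Y) :
    ∃ h : RelLoop star Y ≃ₜ Tot star Y,
      ∀ (γ : RelLoop star Y) (k : ℕ) (t : simplex k),
        ((h γ).1 k) t = (fun j => γ.1 (t.1 j), ⟨γ.1 1, γ.2.2⟩) :=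
  relLoop_homeo_tot_general star Y

end RelLoopTot
end

section
/- Let M be a monoid with submonoid N. Define, for f = (x₁,…,x_k) a k-tuple in M and tuples g₁,…,g_k with attached elements n₁,…,n_k ∈ N, the left action ς(f, (g₁;n₁),…,(g_k;n_k)) := (γ(f; g₁, g₂ ▷ n₁, g₃ ▷ n₂n₁, …, g_k ▷ n_{k−1}⋯n₁); n_k ⋯ n₁), where γ(f; h₁,…,h_k) concatenates the tuples x_i ◁ h_i and ▷, ◁ are diagonal right/left translations. Then ς is associative: ς(γ(f; f₁,…,f_k), (g_{1,1};n_{1,1}),…) = ς(f, ς(f₁, (g_{1,1};n_{1,1}),…),…, ς(f_k, …)) whenever both sides are defined. -/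
/-- Operadic composition of the cosimplicial loop space operad of a monoid `M`:
`γ(f; h₁,…,h_k) = (x₁ ◁ h₁) ⧺ ⋯ ⧺ (x_k ◁ h_k)` where `x ◁ (y₁,…,y_l) = (xy₁,…,xy_l)`. -/
def gammaComp {M : Type*} [Monoid M] (f : List M) (fs : List (List M)) : List M :=
  ((f.zip fs).map (fun p => p.2.map (fun y => p.1 * y))).flatten

/-- The product `n_{i}⋯n₁` of the first `i` attached elements (in reversed order). -/
def multPrefix {M : Type*} [Monoid M] (N : Submonoid M) (ns : List N) (i : ℕ) : N :=
  ((ns.take i).reverse).prod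

/-- The left action `ς(f, (g₁;n₁),…,(g_k;n_k)) :=
`(γ(f; g₁, g₂ ▷ n₁, g₃ ▷ n₂n₁, …, g_k ▷ n_{k−1}⋯n₁); n_k ⋯ n₁)`,
where `▷` is the diagonal right translation. -/
def sigmaAct {M : Type*} [Monoid M] (N : Submonoid M)
    (f : List M) (gs : List (List M × N)) : List M × N :=
  ( ((f.zip (gs.zipIdx.map Prod.swap)).map
      (fun p =>
        (p.2.2.1.map (fun y => y * (multPrefix N (gs.map Prod.snd) p.2.1 : M))).map
          (fun y => p.1 * y))).flatten,
    ((gs.map Prod.snd).reverse).prod )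

/-!
Read `ς(f, (g₁;n₁),…,(g_k;n_k))` as the concatenation of the blocks `x_i ◁ (g_i ▷ q_i)`, where the
twist `q_{i+1} = n_i q_i` accumulates from `q₁ = 1`. Left and right translations commute, right
translation by `q` multiplies every later twist by `q`, and a composite `γ(f; f₁,…,f_k)` splits into
consecutive blocks `x_j ◁ f_j`. Hence on the left-hand side the blocks of `g_{j,•}` coming from
`f_j` carry the twist `n_{j,•}⋯n_{j,1}` times the total twist of all earlier `g_{i,•}`, which is
exactly the twist `ς(f_j, g_{j,•})` receives on the right-hand side.
-/

section TwistedComp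

variable {M : Type*} [Monoid M] {N : Submonoid M}

/-- `twistedComp q f gs = γ(f; g₁ ▷ q, g₂ ▷ n₁q, g₃ ▷ n₂n₁q, …)`. -/
def twistedComp : M → List M → List (List M × N) → List M
  | q, x :: f, (g, n) :: gs => g.map (fun y => x * (y * q)) ++ twistedComp (n * q) f gs
  | _, _, _ => []

def totalTwist (gs : List (List M × N)) : N := ((gs.map Prod.snd).reverse).prod

@[simp]
lemma twistedComp_nil_left (q : M) (gs : List (List M × N)) : twistedComp q [] gs = [] := by
  cases gs <;> rfl

@[simp]
lemma twistedComp_nil_right (q : M) (f : List M) : twistedComp (N := N) q f [] = [] := by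
  cases f <;> rfl

@[simp]
lemma twistedComp_cons_cons (q x : M) (f g : List M) (n : N) (gs : List (List M × N)) :
    twistedComp q (x :: f) ((g, n) :: gs)
      = g.map (fun y => x * (y * q)) ++ twistedComp (n * q) f gs := rfl

@[simp]
lemma totalTwist_nil : totalTwist (N := N) [] = 1 := rfl

@[simp]
lemma totalTwist_cons (g : List M) (n : N) (gs : List (List M × N)) :
    totalTwist ((g, n) :: gs) = totalTwist gs * n := by
  simp [totalTwist]

lemma totalTwist_flatten (gss : List (List (List M × N))) :
    totalTwist gss.flatten = (gss.map totalTwist).reverse.prod := by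
  simp only [totalTwist, List.map_flatten, List.reverse_flatten, List.prod_flatten, List.map_map,
    List.map_reverse, Function.comp_def]
  rfl

lemma twistedComp_mul (p q : M) (f : List M) (gs : List (List M × N)) :
    twistedComp (p * q) f gs = (twistedComp p f gs).map (· * q) := by
  induction f generalizing gs p with
  | nil => simp
  | cons x f ih =>
    rcases gs with _ | ⟨⟨g, n⟩, gs⟩
    · simp
    · simp [← mul_assoc, ih, Function.comp_def]

lemma twistedComp_eq_map_mul (q : M) (f : List M) (gs : List (List M × N)) :
    twistedComp q f gs = (twistedComp 1 f gs).map (· * q) := by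
  rw [← twistedComp_mul, one_mul]

lemma twistedComp_map_mul_left (q x : M) (h : List M) (gs : List (List M × N)) :
    twistedComp q (h.map (x * ·)) gs = (twistedComp q h gs).map (x * ·) := by
  induction h generalizing gs q with
  | nil => simp
  | cons z h ih =>
    rcases gs with _ | ⟨⟨g, n⟩, gs⟩
    · simp
    · simp [ih, mul_assoc, Function.comp_def]

lemma twistedComp_append (q : M) {a : List M} {c : List (List M × N)} (b : List M)
    (d : List (List M × N)) (hac : a.length = c.length) :
    twistedComp q (a ++ b) (c ++ d) = twistedComp q a c ++ twistedComp (totalTwist c * q) b d := by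
  induction a generalizing c q with
  | nil => simp [List.eq_nil_of_length_eq_zero hac.symm]
  | cons x a ih =>
    rcases c with _ | ⟨⟨g, n⟩, c⟩
    · simp at hac
    · simp [ih _ (Nat.succ.inj hac), mul_assoc]

/-- The first component of `ς` read from position `ns.length` on, behind already consumed attached
elements `ns`: the form of the definition that survives induction. -/
lemma sigmaAct_fst_offset_eq_twistedComp (f : List M) (gs : List (List M × N)) (ns : List N) :
    ((f.zip ((gs.zipIdx ns.length).map Prod.swap)).map
      (fun p =>
        (p.2.2.1.map (fun y => y * (multPrefix N (ns ++ gs.map Prod.snd) p.2.1 : M))).map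
          (fun y => p.1 * y))).flatten
      = twistedComp (ns.reverse.prod : M) f gs := by
  induction f generalizing gs ns with
  | nil => simp
  | cons x f ih =>
    rcases gs with _ | ⟨⟨g, n⟩, gs⟩
    · simp
    · have hprefix : multPrefix N (ns ++ n :: gs.map Prod.snd) ns.length = ns.reverse.prod := by
        simp [multPrefix, List.take_left']
      have hrest := ih gs (ns ++ [n])
      simp only [List.length_append, List.length_singleton, List.append_assoc,
        List.singleton_append, List.reverse_append, List.reverse_singleton,
        List.prod_cons] at hrest
      simp only [List.zipIdx_cons, List.map_cons, Prod.swap_prod_mk, List.zip_cons_cons,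
        List.flatten_cons, twistedComp_cons_cons, hprefix, hrest]
      rw [List.map_map, Submonoid.coe_mul]
      rfl

lemma sigmaAct_eq_twistedComp (f : List M) (gs : List (List M × N)) :
    sigmaAct N f gs = (twistedComp 1 f gs, totalTwist gs) := by
  have hfst := sigmaAct_fst_offset_eq_twistedComp f gs []
  simp only [List.length_nil, List.nil_append, List.reverse_nil, List.prod_nil,
    OneMemClass.coe_one] at hfst
  exact Prod.ext hfst rfl

lemma twistedComp_gammaComp (q : M) (f : List M) {fs : List (List M)}
    {gss : List (List (List M × N))}
    (hlen : List.Forall₂ (fun gs h => gs.length = h.length) gss fs) :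
    twistedComp q (gammaComp f fs) gss.flatten
      = twistedComp q f ((fs.zip gss).map fun p => (twistedComp 1 p.1 p.2, totalTwist p.2)) := by
  induction hlen generalizing f q with
  | nil => simp [gammaComp]
  | @cons gs h gss fs hgs _ ih =>
    rcases f with _ | ⟨x, f⟩
    · simp [gammaComp]
    · have hcomp : gammaComp (x :: f) (h :: fs) = h.map (x * ·) ++ gammaComp f fs := by
        simp [gammaComp]
      rw [hcomp, List.flatten_cons, twistedComp_append _ _ _ (by simpa using hgs.symm),
        twistedComp_map_mul_left, twistedComp_eq_map_mul q h, ih]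
      simp [Function.comp_def]

end TwistedComp

theorem sigmaAct_assoc_general {M : Type*} [Monoid M] (N : Submonoid M)
    (f : List M) (fs : List (List M)) (gss : List (List (List M × N)))
    (h2 : gss.length = fs.length)
    (h3 : ∀ (i : ℕ) (hi : i < fs.length) (hi' : i < gss.length),
      (gss[i]).length = (fs[i]).length) :
    sigmaAct N (gammaComp f fs) gss.flatten
      = sigmaAct N f ((fs.zip gss).map (fun p => sigmaAct N p.1 p.2)) := by
  have hlen : List.Forall₂ (fun gs h => gs.length = h.length) gss fs :=
    List.forall₂_iff_get.mpr ⟨h2, fun i hgss hfs => h3 i hfs hgss⟩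
  simp only [sigmaAct_eq_twistedComp]
  refine Prod.ext (twistedComp_gammaComp 1 f hlen) ?_
  calc totalTwist gss.flatten = (gss.map totalTwist).reverse.prod := totalTwist_flatten gss
    _ = (((fs.zip gss).map Prod.snd).map totalTwist).reverse.prod := by
      rw [List.map_snd_zip h2.le]
    _ = _ := by simp [totalTwist, Function.comp_def]

/-- the left action `ς` is associative with respect to the operadic
composition `γ`:
`ς(γ(f; f₁,…,f_k), (g_{1,1};n_{1,1}),…) = ς(f, ς(f₁, (g_{1,1};n_{1,1}),…),…, ς(f_k, …))`
whenever both sides are defined (i.e. the lengths match). -/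
theorem sigmaAct_assoc {M : Type*} [Monoid M] (N : Submonoid M)
    (f : List M) (fs : List (List M)) (gss : List (List (List M × N)))
    (h1 : fs.length = f.length) (h2 : gss.length = fs.length)
    (h3 : ∀ (i : ℕ) (hi : i < fs.length) (hi' : i < gss.length),
      (gss[i]).length = (fs[i]).length) :
    sigmaAct N (gammaComp f fs) gss.flatten
      = sigmaAct N f ((fs.zip gss).map (fun p => sigmaAct N p.1 p.2)) :=
  sigmaAct_assoc_general N f fs gss h2 h3
end
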